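/- arXiv:1001.3068 — 5 statements merged into one kernel-verified Lean document; each statement's English description precedes it below -/
import Mathlib

section
/- For any ordered r-tuple (i_1,...,i_r) of nonnegative integers with ∑ i_j > 0 and any prime p, ν_p(∑_j i_j) ≤ ν_p(∑_j i_j·j) + ν_p of the multinomial coefficient (∑ i_j)!/(i_1!·...·i_r!). -/
/-!
Writing `n = ∑ i_j` and `M` for the multinomial coefficient, splitting off the `j`-th block gives
`M = C(n, i_j) · M'`, and `n ∣ k · C(n, k)`; hence `n ∣ i_j · M` for every `j`, so `n` divides
`(∑ i_j · j) · M`, and `ν_p` is monotone under divisibility and additive on products.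
-/

open Finset

theorem Nat.dvd_mul_choose : ∀ n k : ℕ, n ∣ k * n.choose k
  | _, 0 => by simp
  | 0, _ + 1 => by simp
  | n + 1, k + 1 => ⟨n.choose k, by rw [mul_comm, ← Nat.add_one_mul_choose_eq]⟩

theorem Nat.multinomial_eq_choose_mul_multinomial_erase {α : Type*} [DecidableEq α]
    {s : Finset α} {a : α} (ha : a ∈ s) (f : α → ℕ) :
    Nat.multinomial s f = (∑ i ∈ s, f i).choose (f a) * Nat.multinomial (s.erase a) f := by
  conv_lhs => rw [← insert_erase ha]
  rw [Nat.multinomial_insert (notMem_erase a s), add_sum_erase s f ha]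

theorem Nat.sum_dvd_mul_multinomial {α : Type*} {s : Finset α} {a : α} (ha : a ∈ s)
    (f : α → ℕ) : (∑ i ∈ s, f i) ∣ f a * Nat.multinomial s f := by
  classical
  rw [Nat.multinomial_eq_choose_mul_multinomial_erase ha, ← mul_assoc]
  exact (Nat.dvd_mul_choose _ _).mul_right _

theorem Nat.sum_dvd_sum_mul_mul_multinomial {α : Type*} (s : Finset α) (f w : α → ℕ) :
    (∑ i ∈ s, f i) ∣ (∑ i ∈ s, f i * w i) * Nat.multinomial s f := by
  rw [sum_mul]
  refine dvd_sum fun i hi => ?_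
  rw [mul_right_comm]
  exact (Nat.sum_dvd_mul_multinomial hi f).mul_right _

theorem padicValNat_le_of_dvd {p a b : ℕ} (hp : p ≠ 1) (hb : b ≠ 0) (h : a ∣ b) :
    padicValNat p a ≤ padicValNat p b :=
  (padicValNat_dvd_iff_le_of_ne_one hp hb).mp (pow_padicValNat_dvd.trans h)

theorem val_sum_le_general {p : ℕ} (hp : p.Prime) {r : ℕ} (I : Fin r → ℕ) :
    padicValNat p (∑ j, I j) ≤
      padicValNat p (∑ j, I j * (j.1 + 1)) +
        padicValNat p (Nat.multinomial Finset.univ I) := by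
  have := Fact.mk hp
  obtain hS | hS := (∑ j, I j).eq_zero_or_pos
  · simp [hS]
  have hW : ∑ j, I j * (j.1 + 1) ≠ 0 :=
    (hS.trans_le (sum_le_sum fun j _ => Nat.le_mul_of_pos_right _ j.1.succ_pos)).ne'
  have hM : Nat.multinomial univ I ≠ 0 := (Nat.multinomial_pos _ _).ne'
  rw [← padicValNat.mul hW hM]
  exact padicValNat_le_of_dvd hp.ne_one (mul_ne_zero hW hM)
    (Nat.sum_dvd_sum_mul_mul_multinomial _ _ _)

theorem val_sum_le {p : ℕ} (hp : p.Prime) {r : ℕ} (I : Fin r → ℕ)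
    (h : 0 < ∑ j, I j) :
    padicValNat p (∑ j, I j) ≤
      padicValNat p (∑ j, I j * (j.1 + 1)) +
        padicValNat p (Nat.multinomial Finset.univ I) :=
  val_sum_le_general hp I
end

section
/- Let p be a prime, t a nonzero integer, and (i_1,...,i_r) nonnegative integers with 0 < ∑ i_j ≤ p^{ν_p(t)}. Then ν_p(t·(t−1)·...·(t+1−∑ i_j)/(i_1!·...·i_r!)) = ν_p(t) + ν_p((∑ i_j)!/(i_1!·...·i_r!)) − ν_p(∑ i_j). -/
open Finset

private lemma factor_ne_zero {p : ℕ} (hp : p.Prime) (t : ℤ) (ht : t ≠ 0)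
    {k : ℕ} (hk : k < p ^ padicValInt p t) : (t : ℚ) - k ≠ 0 := by
  haveI := Fact.mk hp
  have hdvd : (p : ℤ) ^ padicValInt p t ∣ t := padicValInt_dvd t
  intro h
  have htk : t = (k : ℤ) := by exact_mod_cast sub_eq_zero.mp h
  rcases Nat.eq_zero_or_pos k with h0 | h0
  · exact ht (by simp [htk, h0])
  · have : (p : ℤ) ^ padicValInt p t ∣ (k : ℤ) := htk ▸ hdvd
    have : (p : ℕ) ^ padicValInt p t ∣ k := by exact_mod_cast this
    have := Nat.le_of_dvd h0 this
    omega

private lemma val_small {p : ℕ} (hp : p.Prime) {k v : ℕ} (hk0 : 0 < k)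
    (hk : k < p ^ v) : padicValNat p k < v := by
  haveI := Fact.mk hp
  by_contra h
  push_neg at h
  have : p ^ v ∣ k := dvd_trans (pow_dvd_pow p h) (pow_padicValNat_dvd)
  exact absurd (Nat.le_of_dvd hk0 this) (by omega)

private lemma val_factor {p : ℕ} (hp : p.Prime) (t : ℤ) (ht : t ≠ 0)
    {k : ℕ} (hk0 : 0 < k) (hk : k < p ^ padicValInt p t) :
    padicValRat p ((t : ℚ) - k) = padicValNat p k := by
  haveI := Fact.mk hp
  have hkQ : ((k : ℚ)) ≠ 0 := by positivity
  have htQ : (t : ℚ) ≠ 0 := Int.cast_ne_zero.mpr ht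
  have hvk : padicValRat p (-(k : ℚ)) = padicValNat p k := by
    rw [padicValRat.neg, padicValRat.of_nat]
  have hvt : padicValRat p (t : ℚ) = padicValInt p t := padicValRat.of_int
  have hlt : padicValRat p (-(k : ℚ)) < padicValRat p (t : ℚ) := by
    rw [hvk, hvt]
    exact_mod_cast val_small hp hk0 hk
  have hne : -(k : ℚ) + t ≠ 0 := by
    have := factor_ne_zero hp t ht hk
    intro h; apply this; linarith
  calc padicValRat p ((t : ℚ) - k) = padicValRat p (-(k : ℚ) + t) := by ring_nf
    _ = padicValRat p (-(k : ℚ)) := padicValRat.add_eq_of_lt hne (neg_ne_zero.mpr hkQ) htQ hlt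
    _ = padicValNat p k := hvk

private lemma val_prod {p : ℕ} (hp : p.Prime) (t : ℤ) (ht : t ≠ 0)
    {m : ℕ} (hm : m < p ^ padicValInt p t) :
    padicValRat p (∏ k ∈ Finset.range (m + 1), ((t : ℚ) - k)) =
      (padicValInt p t : ℤ) + padicValNat p (Nat.factorial m) := by
  haveI := Fact.mk hp
  induction m with
  | zero =>
    simp [padicValRat.of_int]
  | succ m ih =>
    have hm' : m < p ^ padicValInt p t := by omega
    rw [Finset.prod_range_succ, padicValRat.mul, ih hm', val_factor hp t ht (by omega) hm]
    · have : (m + 1).factorial = (m + 1) * m.factorial := rfl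
      rw [this, padicValNat.mul (by omega) (Nat.factorial_ne_zero m)]
      push_cast
      ring
    · rw [Finset.prod_ne_zero_iff]
      intro k hk
      exact factor_ne_zero hp t ht (lt_of_lt_of_le (Finset.mem_range.mp hk) (by omega))
    · exact factor_ne_zero hp t ht (by exact_mod_cast hm)

theorem val_gen_multinomial {p : ℕ} (hp : p.Prime) (t : ℤ) (ht : t ≠ 0)
    {r : ℕ} (I : Fin r → ℕ) (h0 : 0 < ∑ j, I j)
    (h1 : ∑ j, I j ≤ p ^ padicValInt p t) :
    padicValRat p
        ((∏ k ∈ Finset.range (∑ j, I j), ((t : ℚ) - k)) /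
          ((∏ j, (I j).factorial : ℕ) : ℚ)) =
      (padicValInt p t : ℤ) + padicValNat p (Nat.multinomial Finset.univ I) -
        padicValNat p (∑ j, I j) := by
  haveI := Fact.mk hp
  set n := ∑ j, I j with hn
  obtain ⟨m, hnm⟩ : ∃ m, n = m + 1 := ⟨n - 1, by omega⟩
  rw [hnm]
  have hm : m < p ^ padicValInt p t := by omega
  have hprodne : (∏ k ∈ Finset.range (m + 1), ((t : ℚ) - k)) ≠ 0 := by
    rw [Finset.prod_ne_zero_iff]
    intro k hk
    exact factor_ne_zero hp t ht (lt_of_lt_of_le (Finset.mem_range.mp hk) (by omega))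
  have hfacne : ((∏ j, (I j).factorial : ℕ) : ℚ) ≠ 0 := by
    positivity
  rw [padicValRat.div hprodne hfacne, val_prod hp t ht hm, padicValRat.of_nat]
  -- key arithmetic facts
  have hspec : (∏ j, (I j).factorial) * Nat.multinomial Finset.univ I = (m + 1).factorial := by
    simpa [← hn, hnm] using Nat.multinomial_spec Finset.univ I
  have hmulval : padicValNat p (∏ j, (I j).factorial) +
      padicValNat p (Nat.multinomial Finset.univ I) = padicValNat p ((m + 1).factorial) := by
    rw [← hspec, padicValNat.mul]
    · exact (Finset.prod_pos fun j _ => Nat.factorial_pos _).ne'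
    · exact (Nat.multinomial_pos _ _).ne'
  have hfacsucc : padicValNat p ((m + 1).factorial) =
      padicValNat p (m + 1) + padicValNat p m.factorial := by
    have : (m + 1).factorial = (m + 1) * m.factorial := rfl
    rw [this, padicValNat.mul (by omega) (Nat.factorial_ne_zero m)]
  omega
end

section
/- Let p be a prime, t a nonzero integer, and m a positive integer with m ≤ p^{ν_p(t)}. Then the p-adic valuation of the coefficient of x^{(p−1)m} in ℓ(x)^t equals ν_p(t) − ν_p(m) − m, where ℓ(x) = log(1+x)/x = ∑_{i≥0} (−1)^i x^i/(i+1) and t may be any (positive or negative) integer. -/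
open PowerSeries

noncomputable def ell : PowerSeries ℚ := PowerSeries.mk fun i => (-1)^i / (i+1)

noncomputable def ellzpow (t : ℤ) : PowerSeries ℚ :=
  if 0 ≤ t then ell ^ t.toNat else ell⁻¹ ^ (-t).toNat

/-!
Write `ℓ = 1 + u`. For every integer `t`, `ℓ^t` is the substitution of `u` into the binomial
series, so `[X^N] ℓ^t = ∑_k C(t,k) [X^N] u^k`. Split `u = c X^(p-1) + w` with
`c = (-1)^(p-1)/p`: the coefficients of `w` satisfy `|w_n|^(p-1) ≤ p^(n-1)`, hence
`|[X^n] w^B|^(p-1) ≤ p^(n-B)`. Expanding `u^k` binomially, the coefficient of `X^((p-1)m)`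
is a sum of terms `C(t,k) C(k,j) c^j [X^((p-1)(m-j))] w^(k-j)`. Since `p`-adic norms are
integral powers of `p` and `(p-1) ν_p(B) < B`, the factor coming from `w^B` is at most
`p^(m-j-1) |B|`, which absorbs `|C(k,j)| ≤ |k|/|B|` and `|C(t,k)| ≤ |t|/|k|`: every term
other than `k = j = m` has norm at most `|t| p^(m-1)`. The term `k = j = m` has norm
`|C(t,m)| p^m = |t| p^m / |m|`, because `|t - i| = |i|` for `0 < i < p^(ν_p t)`. So it
dominates, and the ultrametric inequality gives the valuation exactly.
-/

open Finset

namespace PowerSeries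

theorem coeff_pow_eq_zero_of_lt {R : Type*} [CommSemiring R] {f : R⟦X⟧}
    (hf : constantCoeff f = 0) {n k : ℕ} (h : n < k) : coeff n (f ^ k) = 0 :=
  X_pow_dvd_iff.mp (pow_dvd_pow_of_dvd (X_dvd_iff.mpr hf) k) n h

theorem coeff_subst_eq_sum_range {R : Type*} [CommRing R] {f g : R⟦X⟧}
    (hg : constantCoeff g = 0) (n : ℕ) :
    coeff n (f.subst g) = ∑ k ∈ range (n + 1), coeff k f * coeff n (g ^ k) := by
  rw [coeff_subst' (HasSubst.of_constantCoeff_zero' hg)]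
  refine finsum_eq_sum_of_support_subset _ fun k hk => ?_
  by_contra hkn
  simp only [coe_range, Set.mem_Iio, not_lt] at hkn
  exact hk (by simp [coeff_pow_eq_zero_of_lt hg (Nat.lt_of_succ_le hkn)])

variable {K : Type*} [Field K] [CharZero K] {φ : K⟦X⟧}

theorem subst_binomialSeries_natCast (hφ : constantCoeff φ = 0) (n : ℕ) :
    (binomialSeries K (n : K)).subst φ = (1 + φ) ^ n := by
  have hs := HasSubst.of_constantCoeff_zero' hφ
  rw [binomialSeries_nat, ← coe_substAlgHom hs, map_pow, map_add, map_one, coe_substAlgHom,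
    subst_X hs]

theorem subst_binomialSeries_neg_natCast (hφ : constantCoeff φ = 0) (n : ℕ) :
    (binomialSeries K (-n : K)).subst φ = (1 + φ)⁻¹ ^ n := by
  have hs := HasSubst.of_constantCoeff_zero' hφ
  have hinv : (1 + φ)⁻¹ * (1 + φ) = 1 := PowerSeries.inv_mul_cancel _ (by simp [hφ])
  have hmul : (binomialSeries K (-n : K)).subst φ * (1 + φ) ^ n = 1 := by
    rw [← subst_binomialSeries_natCast hφ, ← subst_mul hs, ← binomialSeries_add,
      neg_add_cancel, binomialSeries_zero, ← coe_substAlgHom hs, map_one]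
  calc (binomialSeries K (-n : K)).subst φ
      = (1 + φ)⁻¹ ^ n * (1 + φ) ^ n * (binomialSeries K (-n : K)).subst φ := by
        rw [← mul_pow, hinv, one_pow, one_mul]
    _ = (1 + φ)⁻¹ ^ n := by rw [mul_assoc, mul_comm _ (subst _ _), hmul, mul_one]

end PowerSeries

theorem constantCoeff_ell_sub_one : constantCoeff (ell - 1) = 0 := by
  simp [ell]

theorem ellzpow_eq_subst (t : ℤ) :
    ellzpow t = (PowerSeries.binomialSeries ℚ (t : ℚ)).subst (ell - 1) := by
  rcases t with n | n
  · rw [Int.ofNat_eq_natCast, ellzpow, if_pos (Int.natCast_nonneg n), Int.toNat_natCast,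
      Int.cast_natCast, subst_binomialSeries_natCast constantCoeff_ell_sub_one, add_sub_cancel]
  · rw [ellzpow, if_neg (Int.negSucc_lt_zero n).not_ge, Int.neg_negSucc, Int.toNat_natCast,
      Int.cast_negSucc, subst_binomialSeries_neg_natCast constantCoeff_ell_sub_one, add_sub_cancel]

theorem coeff_ellzpow (t : ℤ) (n : ℕ) :
    coeff n (ellzpow t) =
      ∑ k ∈ range (n + 1), Ring.choose (t : ℚ) k * coeff n ((ell - 1) ^ k) := by
  simp [ellzpow_eq_subst, coeff_subst_eq_sum_range constantCoeff_ell_sub_one, binomialSeries_coeff]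

theorem Nat.sub_one_mul_add_one_le_pow {p : ℕ} (hp : p ≠ 0) (v : ℕ) :
    (p - 1) * v + 1 ≤ p ^ v := by
  have := one_add_mul_le_pow_of_sq_nonneg (a := p - 1) (by positivity) (by positivity)
    (by positivity) v
  rwa [Nat.add_sub_cancel' (Nat.one_le_iff_ne_zero.mpr hp), add_comm, mul_comm] at this

section Padic

variable {p : ℕ}

theorem padicNorm_natCast_eq_zpow {n : ℕ} (hn : n ≠ 0) :
    padicNorm p n = (p : ℚ) ^ (-(padicValNat p n : ℤ)) := by
  rw [padicNorm.eq_zpow_of_nonzero (by exact_mod_cast hn), padicValRat.of_nat]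

variable [hp : Fact p.Prime]

theorem padicValRat_eq_of_padicNorm_eq {a b : ℚ} (hb : b ≠ 0)
    (h : padicNorm p a = padicNorm p b) : padicValRat p a = padicValRat p b := by
  have ha : a ≠ 0 := fun ha =>
    hb (padicNorm.zero_of_padicNorm_eq_zero (by rw [← h, ha, padicNorm.zero]))
  rw [padicNorm.eq_zpow_of_nonzero ha, padicNorm.eq_zpow_of_nonzero hb] at h
  exact neg_inj.mp (zpow_right_injective₀ (by exact_mod_cast hp.out.pos)
    (by exact_mod_cast hp.out.ne_one) h)

theorem padicNorm_le_zpow_sub_one_of_pow_le {x : ℚ} {d : ℕ} {e s : ℤ}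
    (hx : padicNorm p x ^ d ≤ (p : ℚ) ^ e) (he : e < d * s) :
    padicNorm p x ≤ (p : ℚ) ^ (s - 1) := by
  have hp1 : (1 : ℚ) < p := by exact_mod_cast hp.out.one_lt
  rcases eq_or_ne x 0 with rfl | hx0
  · simpa using zpow_nonneg (by positivity) _
  rw [padicNorm.eq_zpow_of_nonzero hx0, ← zpow_natCast, ← zpow_mul,
    zpow_le_zpow_iff_right₀ hp1] at hx
  rw [padicNorm.eq_zpow_of_nonzero hx0, zpow_le_zpow_iff_right₀ hp1]
  have : -padicValRat p x < s := by
    by_contra! h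
    nlinarith [(Int.natCast_nonneg d)]
  omega

theorem padicNorm_sub_eq_of_lt {q r : ℚ} (h : padicNorm p q < padicNorm p r) :
    padicNorm p (q - r) = padicNorm p r := by
  rw [sub_eq_add_neg, padicNorm.add_eq_max_of_ne (by rw [padicNorm.neg]; exact h.ne),
    padicNorm.neg, max_eq_right h.le]

theorem padicNorm_intCast_lt_natCast {t : ℤ} {i : ℕ} (hi0 : i ≠ 0)
    (hi : i < p ^ padicValInt p t) : padicNorm p t < padicNorm p i := by
  have hp1 : (1 : ℚ) < p := by exact_mod_cast hp.out.one_lt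
  have hval : padicValNat p i < padicValInt p t :=
    (Nat.pow_lt_pow_iff_right hp.out.one_lt).mp
      ((Nat.le_of_dvd (Nat.pos_of_ne_zero hi0) pow_padicValNat_dvd).trans_lt hi)
  calc padicNorm p t ≤ (p : ℚ) ^ (-(padicValInt p t : ℤ)) :=
        padicNorm.dvd_iff_norm_le.mp (by exact_mod_cast padicValInt_dvd t)
    _ < (p : ℚ) ^ (-(padicValNat p i : ℤ)) := zpow_lt_zpow_right₀ hp1 (by omega)
    _ = padicNorm p i := (padicNorm_natCast_eq_zpow hi0).symm

theorem padicNorm_choose_intCast_le_one (z : ℤ) (k : ℕ) :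
    padicNorm p (Ring.choose (z : ℚ) k) ≤ 1 := by
  rw [← eq_intCast (Int.castRingHom ℚ), ← Ring.map_choose]
  exact padicNorm.of_int _

theorem padicNorm_natCast_mul_choose_le (z : ℤ) (k : ℕ) :
    padicNorm p k * padicNorm p (Ring.choose (z : ℚ) k) ≤ padicNorm p z := by
  rcases k with _ | k
  · simpa using padicNorm.nonneg _
  have h := Ring.choose_smul_choose (z : ℚ) (n := k + 1) (k := 1) (by omega)
  rw [Nat.choose_one_right, nsmul_eq_mul, Ring.choose_one_right, Nat.add_sub_cancel,
    Nat.cast_one, show (z : ℚ) - 1 = ((z - 1 : ℤ) : ℚ) by push_cast; ring] at h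
  rw [← padicNorm.mul, h, padicNorm.mul]
  exact mul_le_of_le_one_right (padicNorm.nonneg _) (padicNorm_choose_intCast_le_one _ _)

theorem padicNorm_natCast_mul_choose_eq {t : ℤ} {k : ℕ} (hk0 : k ≠ 0)
    (hk : k ≤ p ^ padicValInt p t) :
    padicNorm p k * padicNorm p (Ring.choose (t : ℚ) k) = padicNorm p t := by
  induction k, Nat.one_le_iff_ne_zero.mpr hk0 using Nat.le_induction with
  | base => simp
  | succ k hk1 ih =>
    have h := Ring.choose_smul_choose (t : ℚ) (k.le_add_right 1)
    rw [Nat.choose_succ_self_right, nsmul_eq_mul, Nat.add_sub_cancel_left,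
      Ring.choose_one_right] at h
    rw [← padicNorm.mul, h, padicNorm.mul, padicNorm_sub_eq_of_lt
      (padicNorm_intCast_lt_natCast (by omega) (by omega)), mul_comm, ih (by omega) (by omega)]

theorem sub_one_mul_padicValNat_lt {n : ℕ} (hn : n ≠ 0) : (p - 1) * padicValNat p n < n :=
  (Nat.sub_one_mul_add_one_le_pow hp.out.ne_zero _).trans
    (Nat.le_of_dvd (Nat.pos_of_ne_zero hn) pow_padicValNat_dvd)

theorem sub_one_mul_padicValNat_add_two_le {q : ℕ} (hq : 2 ≤ q) (hqp : q ≠ p) :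
    (p - 1) * padicValNat p q + 2 ≤ q := by
  have hp2 := hp.out.two_le
  have hdvd := pow_padicValNat_dvd (p := p) (n := q)
  match hv : padicValNat p q with
  | 0 => omega
  | 1 =>
    obtain ⟨r, rfl⟩ : p ∣ q := by rwa [hv, pow_one] at hdvd
    have : 2 ≤ r := by
      rcases r with _ | _ | r
      · omega
      · simp at hqp
      · omega
    have := Nat.mul_le_mul_left p this
    omega
  | v + 2 =>
    rw [hv] at hdvd
    have hbern := Nat.sub_one_mul_add_one_le_pow hp.out.ne_zero (v + 1)
    calc (p - 1) * (v + 2) + 2 ≤ ((p - 1) * (v + 1) + 1) * p := by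
          obtain ⟨a, rfl⟩ : ∃ a, p = a + 2 := ⟨p - 2, by omega⟩
          rw [show a + 2 - 1 = a + 1 by omega]
          nlinarith [Nat.zero_le ((a + 1) * (v + 1) * a)]
      _ ≤ p ^ (v + 1) * p := Nat.mul_le_mul_right p hbern
      _ ≤ q := Nat.le_of_dvd (by omega) (by rwa [← pow_succ])

theorem padicNorm_sum_eq_of_lt {ι : Type*} {s : Finset ι} {F : ι → ℚ} {i : ι} (hi : i ∈ s)
    (h : ∀ j ∈ s, j ≠ i → padicNorm p (F j) < padicNorm p (F i)) :
    padicNorm p (∑ j ∈ s, F j) = padicNorm p (F i) :=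
  IsNonarchimedean.apply_sum_eq_of_lt (fun _ _ => padicNorm.nonarchimedean)
    (fun a => (padicNorm.neg a).symm) hi h

end Padic

/-- `ν_p(coeff n f) ≥ (e - n) / d` for all `n`, stated on `d`-th powers of norms so that all
exponents stay integral. -/
def PadicCoeffBound (p d : ℕ) (e : ℤ) (f : ℚ⟦X⟧) : Prop :=
  ∀ n : ℕ, padicNorm p (coeff n f) ^ d ≤ (p : ℚ) ^ ((n : ℤ) - e)

namespace PadicCoeffBound

variable {p d : ℕ} {e e' : ℤ} {f g : ℚ⟦X⟧}

theorem X_pow (hd : d ≠ 0) (s : ℕ) : PadicCoeffBound p d s ((X : ℚ⟦X⟧) ^ s) := by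
  intro n
  rw [coeff_X_pow]
  split_ifs with hn
  · simp [hn]
  · simpa [zero_pow hd] using zpow_nonneg (Nat.cast_nonneg p) _

variable [hp : Fact p.Prime]

theorem mul (hf : PadicCoeffBound p d e f) (hg : PadicCoeffBound p d e' g) :
    PadicCoeffBound p d (e + e') (f * g) := by
  intro n
  have hp0 : (p : ℚ) ≠ 0 := by exact_mod_cast hp.out.ne_zero
  obtain ⟨x, hx, hle⟩ := IsNonarchimedean.finset_image_add_of_nonempty
    (fun _ _ => padicNorm.nonarchimedean (p := p)) (fun x => coeff x.1 f * coeff x.2 g)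
    (⟨(0, n), by simp⟩ : (antidiagonal n).Nonempty)
  rw [HasAntidiagonal.mem_antidiagonal] at hx
  rw [coeff_mul]
  calc padicNorm p (∑ x ∈ antidiagonal n, coeff x.1 f * coeff x.2 g) ^ d
      ≤ (padicNorm p (coeff x.1 f) * padicNorm p (coeff x.2 g)) ^ d := by
        rw [← padicNorm.mul]; exact pow_le_pow_left₀ (padicNorm.nonneg _) hle d
    _ ≤ (p : ℚ) ^ ((x.1 : ℤ) - e) * (p : ℚ) ^ ((x.2 : ℤ) - e') := by
        rw [mul_pow]
        exact mul_le_mul (hf _) (hg _) (pow_nonneg (padicNorm.nonneg _) _) (by positivity)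
    _ = (p : ℚ) ^ ((n : ℤ) - (e + e')) := by
        rw [← zpow_add₀ hp0, ← hx]; push_cast; ring_nf

theorem pow (hd : d ≠ 0) (hf : PadicCoeffBound p d e f) (k : ℕ) :
    PadicCoeffBound p d (k * e) (f ^ k) := by
  induction k with
  | zero => simpa using X_pow (p := p) hd 0
  | succ k ih => simpa [pow_succ, add_mul] using ih.mul hf

end PadicCoeffBound

noncomputable def ellTail (p : ℕ) : ℚ⟦X⟧ := ell - 1 - C (coeff (p - 1) ell) * X ^ (p - 1)

theorem coeff_ell_sub_one_pow (p N k : ℕ) :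
    coeff N ((ell - 1) ^ k) = ∑ j ∈ range (k + 1), (k.choose j : ℚ) * coeff (p - 1) ell ^ j *
      coeff N (X ^ ((p - 1) * j) * ellTail p ^ (k - j)) := by
  rw [show ell - 1 = C (coeff (p - 1) ell) * X ^ (p - 1) + ellTail p by rw [ellTail]; ring,
    add_pow, map_sum]
  refine sum_congr rfl fun j _ => ?_
  rw [show (C (coeff (p - 1) ell) * X ^ (p - 1)) ^ j * ellTail p ^ (k - j) *
      (k.choose j : ℚ⟦X⟧) =
      C ((k.choose j : ℚ) * coeff (p - 1) ell ^ j) * (X ^ ((p - 1) * j) * ellTail p ^ (k - j)) by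
    rw [map_mul, map_pow, map_natCast]; ring, coeff_C_mul]

section Estimates

variable {p : ℕ} [hp : Fact p.Prime]

theorem padicNorm_coeff_ell (n : ℕ) :
    padicNorm p (coeff n ell) = (p : ℚ) ^ (padicValNat p (n + 1) : ℤ) := by
  rw [ell, coeff_mk, padicNorm.div, IsAbsoluteValue.abv_pow (padicNorm p), padicNorm.neg,
    padicNorm.one, one_pow, show (n : ℚ) + 1 = ((n + 1 : ℕ) : ℚ) by push_cast; ring,
    padicNorm_natCast_eq_zpow n.succ_ne_zero, zpow_neg, one_div, inv_inv]

theorem padicNorm_coeff_sub_one_ell : padicNorm p (coeff (p - 1) ell) = p := by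
  rw [padicNorm_coeff_ell, Nat.sub_add_cancel hp.out.one_le, padicValNat_self, Nat.cast_one,
    zpow_one]

theorem padicCoeffBound_ellTail : PadicCoeffBound p (p - 1) 1 (ellTail p) := by
  intro n
  have hp2 := hp.out.two_le
  have hd : p - 1 ≠ 0 := by omega
  rw [ellTail, map_sub, map_sub, coeff_C_mul, coeff_X_pow, coeff_one]
  by_cases hn : n = 0 ∨ n = p - 1
  · have hcoeff : coeff n ell - (if n = 0 then 1 else 0) -
        coeff (p - 1) ell * (if n = p - 1 then 1 else 0) = 0 := by
      rcases hn with rfl | rfl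
      · simp [show 0 ≠ p - 1 by omega, ell]
      · simp [hd]
    rw [hcoeff, padicNorm.zero, zero_pow hd]
    positivity
  obtain ⟨hn0, hnp⟩ := not_or.mp hn
  rw [if_neg hn0, if_neg hnp, sub_zero, mul_zero, sub_zero, padicNorm_coeff_ell, ← zpow_natCast,
    ← zpow_mul]
  refine zpow_le_zpow_right₀ (by exact_mod_cast hp.out.one_le) ?_
  have := sub_one_mul_padicValNat_add_two_le (p := p) (q := n + 1) (by omega) (by omega)
  zify [hp.out.one_le] at this ⊢
  linarith

theorem padicNorm_coeff_X_pow_mul_ellTail_pow_le (j m : ℕ) {B : ℕ} (hB : B ≠ 0) :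
    padicNorm p (coeff ((p - 1) * m) (X ^ ((p - 1) * j) * ellTail p ^ B)) ≤
      padicNorm p B * (p : ℚ) ^ ((m : ℤ) - j - 1) := by
  have hp1 := hp.out.one_le
  have hd : p - 1 ≠ 0 := by have := hp.out.two_le; omega
  have hbound := ((PadicCoeffBound.X_pow hd ((p - 1) * j)).mul
    (padicCoeffBound_ellTail.pow hd B)) ((p - 1) * m)
  have hlt := sub_one_mul_padicValNat_lt (p := p) hB
  have := padicNorm_le_zpow_sub_one_of_pow_le hbound
    (s := (m : ℤ) - j - padicValNat p B) (by push_cast [hp1]; zify [hp1] at hlt; nlinarith)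
  rw [padicNorm_natCast_eq_zpow hB, ← zpow_add₀ (by exact_mod_cast hp.out.ne_zero)]
  convert this using 2
  ring

theorem padicNorm_coeff_ell_sub_one_pow_summand_le {k j : ℕ} (m : ℕ) (hjk : j < k) :
    padicNorm p ((k.choose j : ℚ) * coeff (p - 1) ell ^ j *
      coeff ((p - 1) * m) (X ^ ((p - 1) * j) * ellTail p ^ (k - j))) ≤
      padicNorm p k * (p : ℚ) ^ ((m : ℤ) - 1) := by
  have hchoose : padicNorm p (k - j : ℕ) * padicNorm p (k.choose j) ≤ padicNorm p k := by
    simpa [Nat.choose_symm hjk.le, Ring.choose_natCast] using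
      padicNorm_natCast_mul_choose_le (p := p) (k : ℤ) (k - j)
  have hpow : (p : ℚ) ^ j * (p : ℚ) ^ ((m : ℤ) - j - 1) = (p : ℚ) ^ ((m : ℤ) - 1) := by
    rw [← zpow_natCast, ← zpow_add₀ (by exact_mod_cast hp.out.ne_zero)]
    ring_nf
  rw [padicNorm.mul, padicNorm.mul, IsAbsoluteValue.abv_pow (padicNorm p),
    padicNorm_coeff_sub_one_ell]
  calc padicNorm p (k.choose j) * (p : ℚ) ^ j *
        padicNorm p (coeff ((p - 1) * m) (X ^ ((p - 1) * j) * ellTail p ^ (k - j)))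
      ≤ padicNorm p (k.choose j) * (p : ℚ) ^ j *
        (padicNorm p (k - j : ℕ) * (p : ℚ) ^ ((m : ℤ) - j - 1)) :=
        mul_le_mul_of_nonneg_left (padicNorm_coeff_X_pow_mul_ellTail_pow_le j m (by omega))
          (mul_nonneg (padicNorm.nonneg _) (by positivity))
    _ = padicNorm p (k - j : ℕ) * padicNorm p (k.choose j) * (p : ℚ) ^ ((m : ℤ) - 1) := by
        rw [← hpow]; ring
    _ ≤ padicNorm p k * (p : ℚ) ^ ((m : ℤ) - 1) :=
        mul_le_mul_of_nonneg_right hchoose (by positivity)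

theorem padicNorm_coeff_ell_sub_one_pow_le {k m : ℕ} (hkm : k ≠ m) :
    padicNorm p (coeff ((p - 1) * m) ((ell - 1) ^ k)) ≤
      padicNorm p k * (p : ℚ) ^ ((m : ℤ) - 1) := by
  rw [coeff_ell_sub_one_pow p]
  refine padicNorm.sum_le' (fun j hj => ?_) (mul_nonneg (padicNorm.nonneg _) (by positivity))
  rcases (Nat.lt_succ_iff.mp (mem_range.mp hj)).lt_or_eq with hjk | rfl
  · exact padicNorm_coeff_ell_sub_one_pow_summand_le m hjk
  have hne : (p - 1) * m ≠ (p - 1) * j :=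
    fun h => hkm (Nat.eq_of_mul_eq_mul_left (by have := hp.out.two_le; omega) h).symm
  simpa [coeff_X_pow, hne] using mul_nonneg (padicNorm.nonneg _) (by positivity)

theorem padicNorm_coeff_ell_sub_one_pow_self (m : ℕ) :
    padicNorm p (coeff ((p - 1) * m) ((ell - 1) ^ m)) = (p : ℚ) ^ m := by
  have hmain : padicNorm p ((m.choose m : ℚ) * coeff (p - 1) ell ^ m *
      coeff ((p - 1) * m) (X ^ ((p - 1) * m) * ellTail p ^ (m - m))) = (p : ℚ) ^ m := by
    simp [IsAbsoluteValue.abv_pow (padicNorm p), padicNorm_coeff_sub_one_ell]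
  rw [coeff_ell_sub_one_pow p, padicNorm_sum_eq_of_lt (self_mem_range_succ m), hmain]
  intro j hj hjm
  rw [hmain]
  calc _ ≤ padicNorm p m * (p : ℚ) ^ ((m : ℤ) - 1) :=
        padicNorm_coeff_ell_sub_one_pow_summand_le m
          ((Nat.lt_succ_iff.mp (mem_range.mp hj)).lt_of_ne hjm)
    _ ≤ 1 * (p : ℚ) ^ ((m : ℤ) - 1) :=
        mul_le_mul_of_nonneg_right (padicNorm.of_nat m) (by positivity)
    _ < (p : ℚ) ^ m := by
        rw [one_mul, ← zpow_natCast]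
        exact zpow_lt_zpow_right₀ (by exact_mod_cast hp.out.one_lt) (by omega)

theorem padicNorm_coeff_ellzpow {t : ℤ} (ht : t ≠ 0) {m : ℕ} (hm : m ≠ 0)
    (hmp : m ≤ p ^ padicValInt p t) :
    padicNorm p (coeff ((p - 1) * m) (ellzpow t)) =
      padicNorm p (Ring.choose (t : ℚ) m) * (p : ℚ) ^ m := by
  have hp1 : (1 : ℚ) < p := by exact_mod_cast hp.out.one_lt
  have hmN : m ∈ range ((p - 1) * m + 1) := mem_range.mpr
    (Nat.lt_succ_of_le (Nat.le_mul_of_pos_left m (by have := hp.out.two_le; omega)))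
  have hchoose : padicNorm p t ≤ padicNorm p (Ring.choose (t : ℚ) m) := by
    rw [← padicNorm_natCast_mul_choose_eq hm hmp]
    exact mul_le_of_le_one_left (padicNorm.nonneg _) (padicNorm.of_nat m)
  rw [coeff_ellzpow, padicNorm_sum_eq_of_lt hmN, padicNorm.mul,
    padicNorm_coeff_ell_sub_one_pow_self]
  intro k _ hkm
  rw [padicNorm.mul, padicNorm.mul, padicNorm_coeff_ell_sub_one_pow_self]
  calc padicNorm p (Ring.choose (t : ℚ) k) * padicNorm p (coeff ((p - 1) * m) ((ell - 1) ^ k))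
      ≤ padicNorm p (Ring.choose (t : ℚ) k) * (padicNorm p k * (p : ℚ) ^ ((m : ℤ) - 1)) :=
        mul_le_mul_of_nonneg_left (padicNorm_coeff_ell_sub_one_pow_le hkm) (padicNorm.nonneg _)
    _ = padicNorm p k * padicNorm p (Ring.choose (t : ℚ) k) * (p : ℚ) ^ ((m : ℤ) - 1) := by
        ring
    _ ≤ padicNorm p t * (p : ℚ) ^ ((m : ℤ) - 1) :=
        mul_le_mul_of_nonneg_right (padicNorm_natCast_mul_choose_le t k) (by positivity)
    _ < padicNorm p t * (p : ℚ) ^ m := by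
        rw [← zpow_natCast]
        exact mul_lt_mul_of_pos_left (zpow_lt_zpow_right₀ hp1 (by omega))
          ((padicNorm.nonneg _).lt_of_ne (padicNorm.nonzero (by exact_mod_cast ht)).symm)
    _ ≤ padicNorm p (Ring.choose (t : ℚ) m) * (p : ℚ) ^ m :=
        mul_le_mul_of_nonneg_right hchoose (by positivity)

end Estimates

theorem main_divisibility {p : ℕ} (hp : p.Prime) (t : ℤ) (ht : t ≠ 0)
    (m : ℕ) (hm : 0 < m) (hmp : m ≤ p ^ padicValInt p t) :
    padicValRat p (PowerSeries.coeff ((p - 1) * m) (ellzpow t)) =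
      (padicValInt p t : ℤ) - padicValNat p m - m := by
  have := Fact.mk hp
  have ht0 : (t : ℚ) ≠ 0 := by exact_mod_cast ht
  have hm0 : (m : ℚ) ≠ 0 := by exact_mod_cast hm.ne'
  have hpm0 : (p : ℚ) ^ m ≠ 0 := pow_ne_zero _ (by exact_mod_cast hp.ne_zero)
  have hnorm : padicNorm p (coeff ((p - 1) * m) (ellzpow t)) =
      padicNorm p (t / (m * p ^ m)) := by
    rw [padicNorm_coeff_ellzpow ht hm.ne' hmp, padicNorm.div,
      ← padicNorm_natCast_mul_choose_eq hm.ne' hmp, padicNorm.mul,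
      IsAbsoluteValue.abv_pow (padicNorm p), padicNorm.padicNorm_p_of_prime, inv_pow,
      mul_div_mul_left _ _ (padicNorm.nonzero hm0), div_inv_eq_mul]
  rw [padicValRat_eq_of_padicNorm_eq (div_ne_zero ht0 (mul_ne_zero hm0 hpm0)) hnorm,
    padicValRat.div ht0 (mul_ne_zero hm0 hpm0), padicValRat.mul hm0 hpm0, padicValRat.of_int,
    padicValRat.of_nat, padicValRat.pow, padicValRat.self hp.one_lt]
  ring
end

section
/- If m is an odd integer with m > 1, then the coefficient of x^m in (x/log(1+x))^m is 0. -/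
open PowerSeries

/-!
Let `L = log (1 + x) = x * ell`, so that `L' = (1 + x)⁻¹`, and `G = ell⁻¹ = x / L`.
Up to the factor `x ^ n`, `G ^ n * L'` is the derivative `L ^ (1 - n) / (1 - n)`, so its
coefficient of `x ^ (n - 1)` vanishes, which gives `[x ^ n] G ^ n = [x ^ n] (G ^ n / (1 + x))`.
On the other hand `σ(x) = -x / (1 + x)` is the involution corresponding to `t ↦ -t` under
`x = e ^ t - 1`, so `L ∘ σ = -L` and `G ∘ σ = G / (1 + x)`; changing variables by `σ` in the
residue `[x ^ n] f = res f dx / x ^ (n + 1)` gives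
`[x ^ n] G ^ n = (-1) ^ n [x ^ n] (G ^ n / (1 + x))`.
For odd `n` the two identities force `[x ^ n] G ^ n = 0`.
-/

namespace PowerSeries

section Residue

variable {R : Type*} [CommRing R] [IsAddTorsionFree R]

theorem coeff_pow_mul_derivative_eq_zero_of_mul_eq_X {G L : R⟦X⟧} (hGL : G * L = X) (k : ℕ) :
    coeff (k + 1) (G ^ (k + 2) * d⁄dX R L) = 0 := by
  have hderiv : d⁄dX R G * L + G * d⁄dX R L = 1 := by
    simpa [Derivation.leibniz, smul_eq_mul, add_comm, mul_comm] using congrArg (d⁄dX R) hGL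
  have key :
      X * d⁄dX R (G ^ (k + 1)) = (k + 1 : ℕ) • (G ^ (k + 1) - G ^ (k + 2) * d⁄dX R L) := by
    rw [derivative_pow, ← hGL, nsmul_eq_mul]
    push_cast
    linear_combination (↑k + 1) * G ^ (k + 1) * hderiv
  have hcoeff := congrArg (coeff (k + 1)) key
  rw [mul_comm, coeff_succ_mul_X, coeff_derivative, map_nsmul, map_sub, smul_sub,
    nsmul_eq_mul' (coeff (k + 1) (G ^ (k + 1))), Nat.cast_succ] at hcoeff
  exact nsmul_right_injective k.succ_ne_zero ((sub_eq_self.mp hcoeff.symm).trans (smul_zero _).symm)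

end Residue

section Field

variable {K : Type*} [Field K]

lemma constantCoeff_one_add_X_ne_zero : constantCoeff (1 + X : K⟦X⟧) ≠ 0 := by simp

variable (K) in
lemma inv_one_add_X_pow_mul_one_add_X_pow (n : ℕ) :
    ((1 + X)⁻¹ : K⟦X⟧) ^ n * (1 + X) ^ n = 1 := by
  rw [← mul_pow, PowerSeries.inv_mul_cancel _ constantCoeff_one_add_X_ne_zero, one_pow]

lemma coeff_one_add_X_pow_of_lt {r n : ℕ} (h : r < n) : coeff n ((1 + X : K⟦X⟧) ^ r) = 0 := by
  have : (1 + X : K⟦X⟧) ^ r = ((1 + Polynomial.X) ^ r : Polynomial K) := by simp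
  rw [this, Polynomial.coeff_coe, Polynomial.coeff_one_add_X_pow, Nat.choose_eq_zero_of_lt h,
    Nat.cast_zero]

lemma subst_inv_mul_subst {a f : K⟦X⟧} (ha : HasSubst a) (hf : constantCoeff f ≠ 0) :
    f⁻¹.subst a * f.subst a = 1 := by
  rw [← subst_mul ha, PowerSeries.inv_mul_cancel f hf, ← coe_substAlgHom ha, map_one]

noncomputable def negXDivOneAddX : K⟦X⟧ := -X * (1 + X)⁻¹

local notation "σ" => (negXDivOneAddX : K⟦X⟧)

lemma constantCoeff_negXDivOneAddX : constantCoeff σ = 0 := by simp [negXDivOneAddX]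

variable (K) in
lemma hasSubst_negXDivOneAddX : HasSubst σ :=
  HasSubst.of_constantCoeff_zero' constantCoeff_negXDivOneAddX

lemma derivative_negXDivOneAddX : d⁄dX K σ = -((1 + X)⁻¹) ^ 2 := by
  rw [negXDivOneAddX, Derivation.leibniz, derivative_inv', map_neg, derivative_X, map_add,
    derivative_one, derivative_X, smul_eq_mul, smul_eq_mul]
  linear_combination (1 + X)⁻¹ * inv_one_add_X_pow_mul_one_add_X_pow K 1

lemma one_add_X_subst_negXDivOneAddX : (1 + X : K⟦X⟧).subst σ = (1 + X)⁻¹ := by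
  rw [← coe_substAlgHom (hasSubst_negXDivOneAddX K), map_add, map_one, coe_substAlgHom,
    subst_X (hasSubst_negXDivOneAddX K), negXDivOneAddX]
  linear_combination (-1 : K⟦X⟧) * inv_one_add_X_pow_mul_one_add_X_pow K 1

lemma inv_one_add_X_subst_negXDivOneAddX : ((1 + X)⁻¹ : K⟦X⟧).subst σ = 1 + X := by
  have h := subst_inv_mul_subst (hasSubst_negXDivOneAddX K)
    (constantCoeff_one_add_X_ne_zero (K := K))
  rw [one_add_X_subst_negXDivOneAddX] at h
  linear_combination (1 + X) * h - ((1 + X)⁻¹ : K⟦X⟧).subst σ *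
    inv_one_add_X_pow_mul_one_add_X_pow K 1

lemma coeff_negXDivOneAddX_pow_mul_one_add_X_pow {i k : ℕ} (hi : i ≤ k + 1) :
    coeff (k + 1) (σ ^ i * (1 + X) ^ k) = if i = k + 1 then (-1) ^ (k + 1) else 0 := by
  rcases hi.lt_or_eq with hi | rfl
  · have hσ : σ ^ i * (1 + X) ^ k = X ^ i * (C ((-1) ^ i) * (1 + X) ^ (k - i)) := by
      rw [negXDivOneAddX, mul_pow, neg_pow, ← Nat.sub_add_cancel (Nat.le_of_lt_succ hi), pow_add,
        Nat.add_sub_cancel, map_pow, map_neg, map_one]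
      linear_combination ((-1) ^ i * X ^ i * (1 + X) ^ (k - i)) *
        inv_one_add_X_pow_mul_one_add_X_pow K i
    rw [hσ, coeff_X_pow_mul', if_pos hi.le, coeff_C_mul, coeff_one_add_X_pow_of_lt (by omega),
      mul_zero, if_neg hi.ne]
  · have hσ : σ ^ (k + 1) * (1 + X) ^ k = X ^ (k + 1) * (C ((-1) ^ (k + 1)) * (1 + X)⁻¹) := by
      rw [negXDivOneAddX, mul_pow, neg_pow, map_pow, map_neg, map_one]
      linear_combination ((-1) ^ (k + 1) * X ^ (k + 1) * (1 + X)⁻¹) *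
        inv_one_add_X_pow_mul_one_add_X_pow K k
    rw [hσ, coeff_X_pow_mul', if_pos le_rfl, Nat.sub_self, coeff_C_mul,
      coeff_zero_eq_constantCoeff_apply, constantCoeff_inv]
    simp

/-- Substituting `x = σ(y)` turns `x⁻¹ ^ (k + 2) dx` into
`(-1) ^ (k + 1) (1 + y) ^ k y⁻¹ ^ (k + 2) dy`. -/
theorem coeff_succ_eq_coeff_subst_negXDivOneAddX_mul (k : ℕ) (f : K⟦X⟧) :
    coeff (k + 1) f = (-1) ^ (k + 1) * coeff (k + 1) (f.subst σ * (1 + X) ^ k) := by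
  have hσ := hasSubst_negXDivOneAddX K
  have htail (g : K⟦X⟧) : coeff (k + 1) ((X ^ (k + 2) * g).subst σ * (1 + X) ^ k) = 0 := by
    have hX : X ∣ σ := ⟨-(1 + X)⁻¹, by rw [negXDivOneAddX]; ring⟩
    have hdvd : X ^ (k + 2) ∣ (X ^ (k + 2) * g).subst σ * (1 + X) ^ k := by
      rw [subst_mul hσ, subst_pow hσ, subst_X hσ]
      exact ((pow_dvd_pow_of_dvd hX _).mul_right _).mul_right _
    exact X_pow_dvd_iff.mp hdvd (k + 1) (by omega)
  have hhead : coeff (k + 1) ((trunc (k + 2) f : K⟦X⟧).subst σ * (1 + X) ^ k) =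
      (-1) ^ (k + 1) * coeff (k + 1) f := by
    rw [subst_coe hσ, Polynomial.aeval_def, eval₂_trunc_eq_sum_range, Finset.sum_mul, map_sum,
      Finset.sum_eq_single (k + 1)]
    · rw [mul_assoc, algebraMap_eq, coeff_C_mul,
        coeff_negXDivOneAddX_pow_mul_one_add_X_pow le_rfl, if_pos rfl, mul_comm]
    · intro i hi hne
      rw [mul_assoc, algebraMap_eq, coeff_C_mul, coeff_negXDivOneAddX_pow_mul_one_add_X_pow
        (Nat.le_of_lt_succ (Finset.mem_range.mp hi)), if_neg hne, mul_zero]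
    · simp
  conv_rhs => rw [eq_X_pow_mul_shift_add_trunc (k + 2) f]
  rw [subst_add hσ, add_mul, map_add, htail, zero_add, hhead, ← mul_assoc, ← mul_pow,
    neg_mul_neg, one_mul, one_pow, one_mul]

section CharZero

variable [CharZero K] {L : K⟦X⟧}

theorem subst_negXDivOneAddX_eq_neg (hL : d⁄dX K L = (1 + X)⁻¹) (hL0 : constantCoeff L = 0) :
    L.subst σ = -L := by
  apply derivative.ext
  · rw [derivative_subst (hasSubst_negXDivOneAddX K), hL, inv_one_add_X_subst_negXDivOneAddX,
      derivative_negXDivOneAddX, map_neg, hL]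
    linear_combination -(1 + X)⁻¹ * inv_one_add_X_pow_mul_one_add_X_pow K 1
  · rw [map_neg, hL0, neg_zero]
    exact constantCoeff_subst_eq_zero constantCoeff_negXDivOneAddX _ hL0

theorem subst_negXDivOneAddX_of_mul_eq_X (hL : d⁄dX K L = (1 + X)⁻¹)
    (hL0 : constantCoeff L = 0) {G : K⟦X⟧} (hGL : G * L = X) :
    G.subst σ = G * (1 + X)⁻¹ := by
  have hσ := hasSubst_negXDivOneAddX K
  have hL_ne : L ≠ 0 := by
    rintro rfl
    simpa using congrArg constantCoeff hL
  have hσG : σ = -(G * L) * (1 + X)⁻¹ := by rw [negXDivOneAddX, hGL]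
  have h := congrArg (subst σ) hGL
  rw [subst_mul hσ, subst_negXDivOneAddX_eq_neg hL hL0, subst_X hσ] at h
  exact mul_right_cancel₀ hL_ne (by linear_combination -h - hσG)

theorem coeff_pow_self_eq_zero_of_odd (hL : d⁄dX K L = (1 + X)⁻¹) (hL0 : constantCoeff L = 0)
    {G : K⟦X⟧} (hGL : G * L = X) {n : ℕ} (hodd : Odd n) (hn : 1 < n) :
    coeff n (G ^ n) = 0 := by
  obtain ⟨k, rfl⟩ : ∃ k, n = k + 2 := ⟨n - 2, by omega⟩
  set H := G ^ (k + 2) * (1 + X)⁻¹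
  have hres : coeff (k + 1) H = 0 := by
    simpa only [hL] using coeff_pow_mul_derivative_eq_zero_of_mul_eq_X hGL k
  have hshift : coeff (k + 2) (G ^ (k + 2)) = coeff (k + 2) H := by
    have : G ^ (k + 2) = H + H * X := by
      linear_combination -G ^ (k + 2) * inv_one_add_X_pow_mul_one_add_X_pow K 1
    rw [this, map_add, coeff_succ_mul_X, hres, add_zero]
  have hflip : coeff (k + 2) (G ^ (k + 2)) = -coeff (k + 2) H := by
    have : (G * (1 + X)⁻¹) ^ (k + 2) * (1 + X) ^ (k + 1) = H := by
      linear_combination G ^ (k + 2) * (1 + X)⁻¹ * inv_one_add_X_pow_mul_one_add_X_pow K (k + 1)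
    rw [coeff_succ_eq_coeff_subst_negXDivOneAddX_mul (k + 1), subst_pow (hasSubst_negXDivOneAddX K),
      subst_negXDivOneAddX_of_mul_eq_X hL hL0 hGL, this, hodd.neg_one_pow, neg_one_mul]
  exact hshift.trans (self_eq_neg.mp (hshift.symm.trans hflip))

end CharZero

end Field

end PowerSeries

lemma constantCoeff_ell : constantCoeff ell = 1 := by
  simp [ell, ← coeff_zero_eq_constantCoeff_apply]

lemma coeff_derivative_X_mul_ell (n : ℕ) : coeff n (d⁄dX ℚ (X * ell)) = (-1) ^ n := by
  rw [coeff_derivative, mul_comm X, coeff_succ_mul_X, ell, coeff_mk]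
  field_simp

lemma derivative_X_mul_ell : d⁄dX ℚ (X * ell) = (1 + X)⁻¹ := by
  rw [eq_inv_iff_mul_eq_one constantCoeff_one_add_X_ne_zero, mul_add, mul_one]
  ext (_ | n)
  · rw [map_add, coeff_derivative_X_mul_ell, coeff_zero_mul_X, coeff_one]
    norm_num
  · rw [map_add, coeff_succ_mul_X, coeff_derivative_X_mul_ell, coeff_derivative_X_mul_ell,
      coeff_one, pow_succ]
    simp

theorem coeff_odd_zero (m : ℕ) (hodd : Odd m) (hm : 1 < m) :
    PowerSeries.coeff m (ell⁻¹ ^ m) = 0 :=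
  coeff_pow_self_eq_zero_of_odd derivative_X_mul_ell (by simp)
    (by rw [mul_left_comm, PowerSeries.inv_mul_cancel _ (by simp [constantCoeff_ell]), mul_one])
    hodd hm
end

section
/- If m > 1 is odd, then the coefficient of x^m in (x/log(1+x))^m equals B_m/m!, where B_m is the m-th Bernoulli number; combined with the vanishing of odd Bernoulli numbers B_m = 0 for odd m > 1, this coefficient is 0. -/
/-!
Write `log(1+x) = x ℓ(x)`. By the Lagrange–Bürmann formula in residue form,
`[x^m] F(log(1+x)) · (log(1+x))' · ℓ^{-(m+1)} = [y^m] F(y)` for every power series `F`.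
For `F(y) = y + y/(e^y - 1) = y e^y/(e^y - 1)` we have `F(log(1+x)) = (1+x) ℓ(x)` because
`e^{log(1+x)} = 1 + x`, and `(log(1+x))' = 1/(1+x)`, so the left side is `[x^m] ℓ^{-m}` and the
right side is `B_m/m!` once `m ≥ 2`.
-/

open PowerSeries

namespace PowerSeries

section Lagrange

variable {K : Type*} [Field K] [CharZero K] {u : K⟦X⟧}

theorem coeff_inv_pow_succ_mul_derivative_X_mul (hu : constantCoeff u ≠ 0) {k : ℕ} (hk : k ≠ 0) :
    coeff k (u⁻¹ ^ (k + 1) * d⁄dX K (X * u)) = 0 := by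
  obtain ⟨j, rfl⟩ := Nat.exists_eq_succ_of_ne_zero hk
  have hinv : u * u⁻¹ = 1 := PowerSeries.mul_inv_cancel u hu
  -- `u⁻¹^(k+1) (X u)'` is `u⁻¹^k - X (u⁻¹^k)' / k`, whose `k`-th coefficient vanishes.
  have key : ((j + 1 : ℕ) : K) • (u⁻¹ ^ (j + 2) * d⁄dX K (X * u)) =
      ((j + 1 : ℕ) : K) • u⁻¹ ^ (j + 1) - X * d⁄dX K (u⁻¹ ^ (j + 1)) := by
    rw [Derivation.leibniz, derivative_pow, derivative_inv', derivative_X, smul_eq_mul,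
      smul_eq_mul, Nat.add_sub_cancel, Nat.cast_smul_eq_nsmul, Nat.cast_smul_eq_nsmul,
      nsmul_eq_mul, nsmul_eq_mul]
    linear_combination ((j + 1 : ℕ) : K⟦X⟧) * u⁻¹ ^ (j + 1) * hinv
  have hcoeff := congrArg (coeff (j + 1)) key
  rw [map_smul, map_sub, map_smul, coeff_succ_X_mul, coeff_derivative, smul_eq_mul,
    smul_eq_mul] at hcoeff
  push_cast at hcoeff
  refine (mul_eq_zero.mp ?_).resolve_right (Nat.cast_add_one_ne_zero j)
  linear_combination hcoeff

theorem coeff_X_mul_pow_mul_derivative_mul_inv_pow (hu : constantCoeff u ≠ 0) (k n : ℕ) :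
    coeff n ((X * u) ^ k * d⁄dX K (X * u) * u⁻¹ ^ (n + 1)) = coeff n (X ^ k : K⟦X⟧) := by
  have hinv : u * u⁻¹ = 1 := PowerSeries.mul_inv_cancel u hu
  rw [coeff_X_pow]
  rcases lt_or_ge n k with hnk | hkn
  · rw [mul_pow, mul_assoc, mul_assoc, coeff_X_pow_mul', if_neg (by omega), if_neg (by omega)]
  obtain ⟨j, rfl⟩ := Nat.exists_eq_add_of_le hkn
  have hpow : (X * u) ^ k * d⁄dX K (X * u) * u⁻¹ ^ (k + j + 1) =
      X ^ k * (u⁻¹ ^ (j + 1) * d⁄dX K (X * u)) := by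
    have hk : (u * u⁻¹) ^ k = 1 := by rw [hinv, one_pow]
    linear_combination X ^ k * u⁻¹ ^ (j + 1) * d⁄dX K (X * u) * hk
  rw [hpow, add_comm, coeff_X_pow_mul]
  rcases eq_or_ne j 0 with rfl | hj
  · simp [constantCoeff_inv, hu]
  · rw [coeff_inv_pow_succ_mul_derivative_X_mul hu hj, if_neg (by omega)]

theorem coeff_aeval_X_mul_mul_derivative_mul_inv_pow (hu : constantCoeff u ≠ 0) (p : Polynomial K)
    (n : ℕ) :
    coeff n (Polynomial.aeval (X * u) p * d⁄dX K (X * u) * u⁻¹ ^ (n + 1)) = p.coeff n := by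
  induction p using Polynomial.induction_on' with
  | add p q hp hq => rw [map_add, add_mul, add_mul, map_add, hp, hq, Polynomial.coeff_add]
  | monomial k a =>
    rw [Polynomial.aeval_monomial, PowerSeries.algebraMap_apply, Algebra.algebraMap_self_apply,
      mul_assoc, mul_assoc, coeff_C_mul, ← mul_assoc,
      coeff_X_mul_pow_mul_derivative_mul_inv_pow hu, coeff_X_pow, Polynomial.coeff_monomial]
    split_ifs <;> simp_all

/-- Lagrange–Bürmann in residue form: `res F(f) f' / f^(n+1) = [y^n] F` for `f = X * u`. -/
theorem coeff_subst_X_mul_mul_derivative_mul_inv_pow (hu : constantCoeff u ≠ 0) (F : K⟦X⟧)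
    (n : ℕ) :
    coeff n (F.subst (X * u) * d⁄dX K (X * u) * u⁻¹ ^ (n + 1)) = coeff n F := by
  have hsub : HasSubst (X * u) := HasSubst.of_constantCoeff_zero' (by simp)
  conv_lhs => rw [eq_X_pow_mul_shift_add_trunc (n + 1) F]
  rw [subst_add hsub, subst_mul hsub, subst_pow hsub, subst_X hsub, subst_coe hsub, add_mul,
    add_mul, map_add, coeff_aeval_X_mul_mul_derivative_mul_inv_pow hu, coeff_trunc,
    if_pos n.lt_succ_self, mul_pow, mul_assoc, mul_assoc, mul_assoc, coeff_X_pow_mul',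
    if_neg (by omega), zero_add]

end Lagrange

theorem constantCoeff_subst_of_constantCoeff_eq_zero {R : Type*} [CommRing R] {a f : R⟦X⟧}
    (ha : constantCoeff a = 0) : constantCoeff (f.subst a) = constantCoeff f := by
  have h := constantCoeff_subst_eq_zero ha (f - C (constantCoeff f)) (by simp)
  rw [subst_sub (HasSubst.of_constantCoeff_zero' ha), subst_C, map_sub, ← constantCoeff_eq,
    sub_eq_zero] at h
  simpa using h

section ExpLog

variable {A : Type*} [CommRing A] [Algebra ℚ A]

theorem one_add_X_mul_derivative_log : (1 + X) * d⁄dX A (log A) = 1 := by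
  ext n
  rw [deriv_log, add_mul, one_mul, map_add]
  cases n with
  | zero => simp
  | succ n => simp [coeff_succ_X_mul, pow_succ]


theorem exp_subst_log : (exp A).subst (log A) = 1 + X := by
  have := IsAddTorsionFree.of_module_rat (M := A)
  set f : A⟦X⟧ := (exp A).subst (log A)
  set S := d⁄dX A (log A)
  have hS : (1 + X) * S = 1 := one_add_X_mul_derivative_log
  have hf : d⁄dX A f = f * S := by
    rw [derivative_subst HasSubst.log, derivative_exp]
  have hS' : d⁄dX A S = -S ^ 2 := by
    have h := congrArg (d⁄dX A) hS
    rw [Derivation.leibniz, map_add, derivative_X, derivative_one, smul_eq_mul, smul_eq_mul] at h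
    linear_combination S * h - d⁄dX A S * hS
  have hfS : f * S = 1 := by
    apply derivative.ext
    · rw [Derivation.leibniz, Derivation.map_one_eq_zero, smul_eq_mul, smul_eq_mul, hf, hS']
      ring
    · rw [map_mul, constantCoeff_subst_of_constantCoeff_eq_zero constantCoeff_log]
      simp [S, deriv_log]
  linear_combination (1 + X) * hfS - f * hS

theorem bernoulliPowerSeries_subst_log_mul_X :
    (bernoulliPowerSeries A).subst (log A) * X = log A := by
  have h := congrArg (substAlgHom (HasSubst.log (A := A))) (bernoulliPowerSeries_mul_exp_sub_one A)
  rwa [map_mul, map_sub, map_one, substAlgHom_X, coe_substAlgHom, exp_subst_log,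
    add_sub_cancel_left] at h

end ExpLog
end PowerSeries

theorem log_eq_X_mul_ell : log ℚ = X * ell := by
  ext n
  cases n with
  | zero => simp
  | succ n => simp [ell, coeff_succ_X_mul, pow_succ]

theorem coeff_odd_eq_bernoulli (m : ℕ) (hodd : Odd m) (hm : 1 < m) :
    PowerSeries.coeff (R := ℚ) m (ell⁻¹ ^ m) = bernoulli m / m.factorial ∧
      PowerSeries.coeff (R := ℚ) m (ell⁻¹ ^ m) = 0 := by
  have hell : constantCoeff ell ≠ 0 := by simp [ell]
  have hB : (bernoulliPowerSeries ℚ).subst (log ℚ) = ell :=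
    X_mul_cancel (by rw [mul_comm, bernoulliPowerSeries_subst_log_mul_X, log_eq_X_mul_ell])
  have hsubst : (X + bernoulliPowerSeries ℚ).subst (log ℚ) * d⁄dX ℚ (log ℚ) * ell⁻¹ ^ (m + 1) =
      ell⁻¹ ^ m := by
    rw [subst_add HasSubst.log, subst_X HasSubst.log, hB]
    linear_combination ell * ell⁻¹ ^ (m + 1) * one_add_X_mul_derivative_log (A := ℚ) +
      ell⁻¹ ^ m * PowerSeries.mul_inv_cancel ell hell +
      d⁄dX ℚ (log ℚ) * ell⁻¹ ^ (m + 1) * log_eq_X_mul_ell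
  have key := coeff_subst_X_mul_mul_derivative_mul_inv_pow hell (X + bernoulliPowerSeries ℚ) m
  rw [← log_eq_X_mul_ell, hsubst, map_add, coeff_X, if_neg (by omega), zero_add,
    bernoulliPowerSeries, coeff_mk, Algebra.algebraMap_self_apply] at key
  exact ⟨key, by rw [key, bernoulli_eq_zero_of_odd hodd hm, zero_div]⟩
end
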